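/- Given a partial category C, the family of morphisms {id_A ↓ U : U → A | U ≤ A} forms an inclusion system for C: it contains all identities, consists of monomorphisms, contains at most one monic between any pair of objects, is stable under composition, and is a display system (pullbacks of its members along arbitrary morphisms exist and again lie in the family). -/
import Mathlib


open CategoryTheory CategoryTheory.Limits

universe v u

/-- A partial structure on a category `C` (composition written diagrammatically,
`f ≫ g`): a partial order `≤` on objects, a restriction operator `f ↓ U` (here `res`),
and a contraction operator `A ↑_f V`, `f ↑ V` (here `ctrObj`, `ctr`), satisfying the
axioms (P.1)–(P.8). -/
structure PartialStructure (C : Type u) [Category.{v} C] where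
  le : C → C → Prop
  le_refl : ∀ A : C, le A A
  le_trans : ∀ {A B D : C}, le A B → le B D → le A D
  le_antisymm : ∀ {A B : C}, le A B → le B A → A = B
  /-- The restriction operator: for `f : A ⟶ B` and `U ≤ A`, `f ↓ U : U ⟶ B`. -/
  res : ∀ {A B : C}, (A ⟶ B) → ∀ {U : C}, le U A → (U ⟶ B)
  /-- The contraction object: for `f : A ⟶ B` and `V ≤ B`, the object `A ↑_f V`. -/
  ctrObj : ∀ {A B : C}, (A ⟶ B) → ∀ {V : C}, le V B → C
  ctrObj_le : ∀ {A B : C} (f : A ⟶ B) {V : C} (h : le V B), le (ctrObj f h) A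
  /-- The contraction morphism `f ↑ V : A ↑_f V ⟶ V`. -/
  ctr : ∀ {A B : C} (f : A ⟶ B) {V : C} (h : le V B), (ctrObj f h ⟶ V)
  P1 : ∀ {A B : C} (f : A ⟶ B), res f (le_refl A) = f
  P2 : ∀ {A B : C} (f : A ⟶ B) {U V : C} (hU : le U A) (hV : le V U),
      res (res f hU) hV = res f (le_trans hV hU)
  P3 : ∀ {A B D : C} (f : A ⟶ B) (g : B ⟶ D) {U : C} (h : le U A),
      res f h ≫ g = res (f ≫ g) h
  P4a : ∀ {A B : C} (f : A ⟶ B), ctrObj f (le_refl B) = A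
  P4b : ∀ {A B : C} (f : A ⟶ B), ctr f (le_refl B) = eqToHom (P4a f) ≫ f
  P4'a : ∀ {A U : C} (h : le U A), ctrObj (𝟙 A) h = U
  P4'b : ∀ {A U : C} (h : le U A), ctr (𝟙 A) h = eqToHom (P4'a h)
  P5a : ∀ {A B : C} (f : A ⟶ B) {V W : C} (hV : le V B) (hW : le W V),
      ctrObj (ctr f hV) hW = ctrObj f (le_trans hW hV)
  P5b : ∀ {A B : C} (f : A ⟶ B) {V W : C} (hV : le V B) (hW : le W V),
      ctr (ctr f hV) hW = eqToHom (P5a f hV hW) ≫ ctr f (le_trans hW hV)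
  P6a : ∀ {A B D : C} (f : A ⟶ B) (g : B ⟶ D) {W : C} (hW : le W D),
      ctrObj f (ctrObj_le g hW) = ctrObj (f ≫ g) hW
  P6b : ∀ {A B D : C} (f : A ⟶ B) (g : B ⟶ D) {W : C} (hW : le W D),
      ctr f (ctrObj_le g hW) ≫ ctr g hW = eqToHom (P6a f g hW) ≫ ctr (f ≫ g) hW
  P7a : ∀ {A B : C} (f : A ⟶ B) {V : C} (hV : le V B),
      ctrObj (res f (ctrObj_le f hV)) hV = ctrObj f hV
  P7b : ∀ {A B : C} (f : A ⟶ B) {V : C} (hV : le V B),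
      ctr (res f (ctrObj_le f hV)) hV = eqToHom (P7a f hV) ≫ ctr f hV
  P8 : ∀ {A B D : C} (f : A ⟶ B) (g : B ⟶ D) {V : C} (hV : le V B),
      res (f ≫ g) (ctrObj_le f hV) = ctr f hV ≫ res g hV

variable {C : Type u} [Category.{v} C]

/-- The family of morphisms `{id_A ↓ U : U ⟶ A | U ≤ A}` of a partial category. -/
def InclusionOf (P : PartialStructure C) {U A : C} (m : U ⟶ A) : Prop :=
  ∃ h : P.le U A, m = P.res (𝟙 A) h

namespace PartialStructure

variable (P : PartialStructure C)

lemma res_eqdom {A B U U' : C} (f : A ⟶ B) (e : U' = U) (h : P.le U A) (h' : P.le U' A) :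
    P.res f h' = eqToHom e ≫ P.res f h := by subst e; simp

lemma ctrObj_eqdom {A A' B V : C} (e : A' = A) (f : A ⟶ B) (h : P.le V B) :
    P.ctrObj (eqToHom e ≫ f) h = P.ctrObj f h := by subst e; simp

lemma ctrObj_congr {A B V : C} {f f' : A ⟶ B} (e : f = f') (h : P.le V B) :
    P.ctrObj f h = P.ctrObj f' h := by rw [e]

lemma ctr_congr {A B V : C} {f f' : A ⟶ B} (e : f = f') (h : P.le V B) :
    P.ctr f h = eqToHom (P.ctrObj_congr e h) ≫ P.ctr f' h := by subst e; simp

lemma ctr_eqdom {A A' B V : C} (e : A' = A) (f : A ⟶ B) (h : P.le V B) :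
    P.ctr (eqToHom e ≫ f) h = eqToHom (P.ctrObj_eqdom e f h) ≫ P.ctr f h := by
  subst e; exact P.ctr_congr (Category.id_comp f) h

lemma ctrObj_eqV {A B V V' : C} (f : A ⟶ B) (e : V' = V) (h : P.le V B) (h' : P.le V' B) :
    P.ctrObj f h' = P.ctrObj f h := by subst e; rfl

lemma ctr_eqV {A B V V' : C} (f : A ⟶ B) (e : V' = V) (h : P.le V B) (h' : P.le V' B) :
    P.ctr f h' = eqToHom (P.ctrObj_eqV f e h h') ≫ P.ctr f h ≫ eqToHom e.symm := by
  subst e; simp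

/-- The contraction of the inclusion `ι hU` along `U` is `U` itself. -/
lemma ctrObj_incl {U A : C} (hU : P.le U A) :
    P.ctrObj (P.res (𝟙 A) hU) hU = U := by
  have e₀ := P.P4'a hU
  have h1 : P.res (𝟙 A) (P.ctrObj_le (𝟙 A) hU) = eqToHom e₀ ≫ P.res (𝟙 A) hU :=
    P.res_eqdom _ e₀ _ _
  have := P.P7a (𝟙 A) hU
  rw [h1, P.ctrObj_eqdom] at this
  rw [this, e₀]

lemma ctr_incl {U A : C} (hU : P.le U A) :
    P.ctr (P.res (𝟙 A) hU) hU = eqToHom (P.ctrObj_incl hU) := by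
  have e₀ := P.P4'a hU
  have h1 : P.res (𝟙 A) (P.ctrObj_le (𝟙 A) hU) = eqToHom e₀ ≫ P.res (𝟙 A) hU :=
    P.res_eqdom _ e₀ _ _
  have h7 := P.P7b (𝟙 A) hU
  rw [P.ctr_congr h1 hU, P.ctr_eqdom, P.P4'b] at h7
  simp only [← Category.assoc, eqToHom_trans] at h7
  have h8 : P.ctr (P.res (𝟙 A) hU) hU = eqToHom (((P.ctrObj_congr h1 hU).trans
      (P.ctrObj_eqdom e₀ (P.res (𝟙 A) hU) hU)).symm) ≫
      eqToHom ((P.P7a (𝟙 A) hU).trans e₀) := by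
    rw [← h7]; simp
  rw [h8]; simp

/-- Key lemma: a morphism `g : Z ⟶ U` is recovered from `g ≫ ι hU` by contraction. -/
lemma key {Z U A : C} (hU : P.le U A) (g : Z ⟶ U) :
    ∃ e : P.ctrObj (g ≫ P.res (𝟙 A) hU) hU = Z,
      P.ctr (g ≫ P.res (𝟙 A) hU) hU = eqToHom e ≫ g := by
  have e6 := P.P6a g (P.res (𝟙 A) hU) hU
  have eV : P.ctrObj g (P.ctrObj_le (P.res (𝟙 A) hU) hU) = P.ctrObj g (P.le_refl U) :=
    P.ctrObj_eqV g (P.ctrObj_incl hU) _ _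
  have eZ : P.ctrObj (g ≫ P.res (𝟙 A) hU) hU = Z := by
    rw [← e6, eV, P.P4a]
  refine ⟨eZ, ?_⟩
  have h6 := P.P6b g (P.res (𝟙 A) hU) hU
  rw [P.ctr_incl] at h6
  have hctr := P.ctr_eqV g (P.ctrObj_incl hU) (P.le_refl U) (P.ctrObj_le (P.res (𝟙 A) hU) hU)
  rw [hctr, P.P4b] at h6
  have := (eqToHom_comp_iff e6 _ _).mp h6.symm
  rw [this]
  simp

lemma mono_incl {U A : C} (hU : P.le U A) : Mono (P.res (𝟙 A) hU) := by
  constructor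
  intro Z g₁ g₂ hgg
  have K := P.key hU g₁
  rw [hgg] at K
  obtain ⟨e₁, k₁⟩ := K
  obtain ⟨e₂, k₂⟩ := P.key hU g₂
  exact (cancel_epi (eqToHom e₁)).mp (k₁.symm.trans k₂)

/-- The universal property data for the pullback square. -/
lemma lift_aux {U A D : C} (hU : P.le U A) (f : D ⟶ A) {Z : C} (q : Z ⟶ U) (r : Z ⟶ D)
    (hc : q ≫ P.res (𝟙 A) hU = r ≫ f) :
    ∃ e : P.ctrObj r (P.ctrObj_le f hU) = Z,
      (eqToHom e.symm ≫ P.ctr r (P.ctrObj_le f hU)) ≫ P.ctr f hU = q ∧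
      (eqToHom e.symm ≫ P.ctr r (P.ctrObj_le f hU)) ≫ P.res (𝟙 D) (P.ctrObj_le f hU) = r := by
  obtain ⟨eK, hK⟩ := P.key hU q
  have e : P.ctrObj r (P.ctrObj_le f hU) = Z :=
    (P.P6a r f hU).trans ((P.ctrObj_congr hc.symm hU).trans eK)
  refine ⟨e, ?_, ?_⟩
  · rw [Category.assoc, P.P6b, P.ctr_congr hc.symm hU, hK]
    simp
  · have h9 : P.ctr r (P.ctrObj_le f hU) ≫ P.res (𝟙 D) (P.ctrObj_le f hU)
        = P.res r (P.ctrObj_le r (P.ctrObj_le f hU)) := by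
      rw [← P.P8 r (𝟙 D), Category.comp_id]
    rw [Category.assoc, h9, P.res_eqdom r e (P.le_refl Z) _, P.P1]
    simp

end PartialStructure

/-- **Statement 19.** Given a partial category `C`, the family of morphisms
`{id_A ↓ U : U ⟶ A | U ≤ A}` forms an inclusion system for `C`: (I.1) it contains all
identities; (I.2) it consists of monomorphisms; (I.3) it contains at most one monic
between any pair of objects; (I.4) it is stable under composition; (I.5) it is a display
system: pullbacks of its members along arbitrary morphisms exist and lie in the family. -/
theorem statement19 (P : PartialStructure C) :
    (∀ A : C, InclusionOf P (𝟙 A)) ∧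
    (∀ {U A : C} (m : U ⟶ A), InclusionOf P m → Mono m) ∧
    (∀ {U A : C} (m m' : U ⟶ A), InclusionOf P m → InclusionOf P m' → m = m') ∧
    (∀ {U V A : C} (m : U ⟶ V) (m' : V ⟶ A),
      InclusionOf P m → InclusionOf P m' → InclusionOf P (m ≫ m')) ∧
    (∀ {U A : C} (m : U ⟶ A), InclusionOf P m → ∀ {D : C} (f : D ⟶ A),
      ∃ (E : C) (m' : E ⟶ D) (p : E ⟶ U), InclusionOf P m' ∧ IsPullback p m' m f) := by
  refine ⟨fun A => ⟨P.le_refl A, (P.P1 (𝟙 A)).symm⟩, ?_, ?_, ?_, ?_⟩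
  · rintro U A m ⟨h, rfl⟩
    exact P.mono_incl h
  · rintro U A m m' ⟨h, rfl⟩ ⟨h', rfl⟩
    rfl
  · rintro U V A m m' ⟨h, rfl⟩ ⟨h', rfl⟩
    exact ⟨P.le_trans h h', by rw [P.P3, Category.id_comp, P.P2]⟩
  · rintro U A m ⟨hU, rfl⟩ D f
    have w : P.ctr f hU ≫ P.res (𝟙 A) hU = P.res (𝟙 D) (P.ctrObj_le f hU) ≫ f := by
      rw [← P.P8 f (𝟙 A) hU, P.P3, Category.id_comp, Category.comp_id]
    refine ⟨P.ctrObj f hU, P.res (𝟙 D) (P.ctrObj_le f hU), P.ctr f hU,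
      ⟨P.ctrObj_le f hU, rfl⟩, ?_⟩
    haveI := P.mono_incl (P.ctrObj_le f hU)
    apply IsPullback.of_isLimit (c := PullbackCone.mk _ _ w)
    refine PullbackCone.IsLimit.mk w
      (fun s => eqToHom (P.lift_aux hU f s.fst s.snd s.condition).choose.symm ≫
        P.ctr s.snd (P.ctrObj_le f hU))
      (fun s => (P.lift_aux hU f s.fst s.snd s.condition).choose_spec.1)
      (fun s => (P.lift_aux hU f s.fst s.snd s.condition).choose_spec.2)
      (fun s mm h1 h2 => ?_)
    rw [← cancel_mono (P.res (𝟙 D) (P.ctrObj_le f hU)), h2,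
      (P.lift_aux hU f s.fst s.snd s.condition).choose_spec.2]
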